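/- arXiv:2009.06550 — 2 statements merged into one kernel-verified Lean document; each statement's English description precedes it below -/
import Mathlib

section
/- Suppose the primal is strictly feasible, i.e., there exists x ∈ relint C with b − A x ∈ relint K. Then the primal optimum is finite, i.e., the set {⟨c, x⟩ : x ∈ X(b)} is nonempty and bounded above, if and only if the dual feasible set Y(c) is nonempty. -/
open RealInnerProductSpace Set Pointwise

variable {E E' : Type*}
  [NormedAddCommGroup E] [InnerProductSpace ℝ E] [FiniteDimensional ℝ E]
  [NormedAddCommGroup E'] [InnerProductSpace ℝ E'] [FiniteDimensional ℝ E']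

/-- A nonempty closed convex cone containing `0`. -/
structure IsClosedConvexCone {F : Type*} [NormedAddCommGroup F] [InnerProductSpace ℝ F]
    (K : Set F) : Prop where
  closed : IsClosed K
  convex : Convex ℝ K
  smul_mem : ∀ ⦃x⦄, x ∈ K → ∀ ⦃t : ℝ⦄, 0 ≤ t → t • x ∈ K
  zero_mem : (0 : F) ∈ K

/-- The dual cone `S* = {y : ⟨x,y⟩ ≥ 0 ∀ x ∈ S}`. -/
def dualCone {F : Type*} [NormedAddCommGroup F] [InnerProductSpace ℝ F] (S : Set F) : Set F :=
  {y | ∀ x ∈ S, 0 ≤ ⟪x, y⟫}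

/-- The polar cone `S° = {y : ⟨x,y⟩ ≤ 0 ∀ x ∈ S}`. -/
def polarCone {F : Type*} [NormedAddCommGroup F] [InnerProductSpace ℝ F] (S : Set F) : Set F :=
  {y | ∀ x ∈ S, ⟪x, y⟫ ≤ 0}

/-- Primal feasible set `X(b) = {x ∈ C : b - A x ∈ K}`. -/
def Xfeas (A : E →ₗ[ℝ] E') (K : Set E') (C : Set E) (b : E') : Set E :=
  {x | x ∈ C ∧ b - A x ∈ K}

/-- Dual feasible set `Y(c) = {y ∈ K* : A* y - c ∈ C*}`. -/
def Yfeas (A : E →ₗ[ℝ] E') (K : Set E') (C : Set E) (c : E) : Set E' :=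
  {y | y ∈ dualCone K ∧ LinearMap.adjoint A y - c ∈ dualCone C}

/-- Primal optimal value `P* = sup {⟨c,x⟩ : x ∈ X(b)}`. -/
noncomputable def Pval (A : E →ₗ[ℝ] E') (K : Set E') (C : Set E) (b : E') (c : E) : ℝ :=
  sSup ((fun x => ⟪c, x⟫) '' Xfeas A K C b)

/-- Dual optimal value `D* = inf {⟨b,y⟩ : y ∈ Y(c)}`. -/
noncomputable def Dval (A : E →ₗ[ℝ] E') (K : Set E') (C : Set E) (b : E') (c : E) : ℝ :=
  sInf ((fun y => ⟪b, y⟫) '' Yfeas A K C c)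

/-- Recession cone of the primal feasible region: `{x ∈ C : A x ∈ -K}`. -/
def recXSet (A : E →ₗ[ℝ] E') (K : Set E') (C : Set E) : Set E :=
  {x | x ∈ C ∧ A x ∈ -K}

/-- Recession cone of the dual feasible region: `{y ∈ K* : A* y ∈ C*}`. -/
def recYSet (A : E →ₗ[ℝ] E') (K : Set E') (C : Set E) : Set E' :=
  {y | y ∈ dualCone K ∧ LinearMap.adjoint A y ∈ dualCone C}

/-- `X(b)` is almost feasible. -/
def AlmostFeasX (A : E →ₗ[ℝ] E') (K : Set E') (C : Set E) (b : E') : Prop :=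
  ∀ ε : ℝ, 0 < ε → ∃ bε : E', ‖bε‖ ≤ ε ∧ (Xfeas A K C (b + bε)).Nonempty

/-- `Y(c)` is almost feasible. -/
def AlmostFeasY (A : E →ₗ[ℝ] E') (K : Set E') (C : Set E) (c : E) : Prop :=
  ∀ ε : ℝ, 0 < ε → ∃ cε : E, ‖cε‖ ≤ ε ∧ (Yfeas A K C (c + cε)).Nonempty

/-!
Weak duality gives one direction. Conversely, let `P` bound the primal values. As
`(x₀, b - A x₀)` lies in the relative interior of `C ×ˢ K`, any `(x, k) ∈ C ×ˢ K` with small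
residual `b - A x - k` can be averaged with a point near the Slater point into a feasible point,
so `⟪c, x⟫` is bounded by some `U` on such almost feasible points. Hence `(b, U + 1)` lies outside
the closure of the convex set `{(A x + k, ⟪c, x⟫) | x ∈ C, k ∈ K}`. A strictly separating
functional `(w, t) ↦ ⟪w, y⟫ + t γ` is, by the cone structure, nonpositive on that set; at the
Slater point this forces `γ > 0`, and then `-y / γ` is dual feasible.
-/

lemma nonpos_of_forall_mul_lt {a u : ℝ} (h : ∀ t : ℝ, 0 ≤ t → t * a < u) : a ≤ 0 := by
  by_contra! ha
  have := h ((|u| + 1) / a) (by positivity)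
  rw [div_mul_cancel₀ _ ha.ne'] at this
  linarith [le_abs_self u]

section Intrinsic

variable {G G' : Type*} [NormedAddCommGroup G] [NormedSpace ℝ G]
  [NormedAddCommGroup G'] [NormedSpace ℝ G']

lemma exists_add_mem_of_mem_intrinsicInterior {S : Set G} {p : G}
    (hp : p ∈ intrinsicInterior ℝ S) :
    ∃ ρ > 0, ∀ v ∈ vectorSpan ℝ S, ‖v‖ ≤ ρ → p + v ∈ S := by
  obtain ⟨p', hp', rfl⟩ := hp
  obtain ⟨ε, hε, hball⟩ := Metric.isOpen_iff.1 isOpen_interior p' hp'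
  refine ⟨ε / 2, by positivity, fun v hv hvε => ?_⟩
  rw [← direction_affineSpan] at hv
  have hq : (⟨v +ᵥ (p' : G), AffineSubspace.vadd_mem_of_mem_direction hv p'.2⟩ :
      affineSpan ℝ S) ∈ Metric.ball p' ε := by
    simp only [Metric.mem_ball, Subtype.dist_eq, vadd_eq_add, dist_eq_norm, add_sub_cancel_right]
    linarith
  simpa [add_comm] using interior_subset (hball hq)

lemma LinearMap.exists_preimage_norm_le_of_mem_range [FiniteDimensional ℝ G] (T : G →ₗ[ℝ] G') :
    ∃ κ > 0, ∀ u ∈ range T, ∃ g, T g = u ∧ ‖g‖ ≤ κ * ‖u‖ := by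
  obtain ⟨κ, hκ, hpre⟩ := ContinuousLinearMap.exists_preimage_norm_le
    (LinearMap.toContinuousLinearMap T.rangeRestrict) T.surjective_rangeRestrict
  refine ⟨κ, hκ, fun u hu => ?_⟩
  obtain ⟨g, hg, hgu⟩ := hpre ⟨u, hu⟩
  exact ⟨g, congrArg Subtype.val hg, hgu⟩

/-- Quantitative form of `T p ∈ intrinsicInterior (T '' S)`. -/
lemma exists_mem_map_eq_add_of_mem_intrinsicInterior [FiniteDimensional ℝ G]
    (T : G →ₗ[ℝ] G') {S : Set G} {p : G} (hp : p ∈ intrinsicInterior ℝ S) :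
    ∃ δ > 0, ∃ R, ∀ v ∈ vectorSpan ℝ S, ‖T v‖ ≤ δ → ∃ q ∈ S, ‖q‖ ≤ R ∧ T q = T p + T v := by
  obtain ⟨ρ, hρ, hball⟩ := exists_add_mem_of_mem_intrinsicInterior hp
  obtain ⟨κ, hκ, hpre⟩ := (T ∘ₗ (vectorSpan ℝ S).subtype).exists_preimage_norm_le_of_mem_range
  refine ⟨ρ / κ, by positivity, ‖p‖ + ρ, fun v hv hTv => ?_⟩
  obtain ⟨g, hg, hgn⟩ := hpre (T v) ⟨⟨v, hv⟩, rfl⟩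
  have hgρ : ‖(g : G)‖ ≤ ρ :=
    calc ‖(g : G)‖ ≤ κ * ‖T v‖ := hgn
      _ ≤ κ * (ρ / κ) := by gcongr
      _ = ρ := by field_simp
  refine ⟨p + g, hball g g.2 hgρ, (norm_add_le _ _).trans (by linarith), ?_⟩
  rw [map_add, ← hg]
  rfl

end Intrinsic

lemma StrongDual.exists_inner_add_mul_eq {F : Type*} [NormedAddCommGroup F]
    [InnerProductSpace ℝ F] [CompleteSpace F] (f : StrongDual ℝ (F × ℝ)) :
    ∃ y : F, ∀ w t, f (w, t) = ⟪w, y⟫ + t * f (0, 1) := by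
  refine ⟨(InnerProductSpace.toDual ℝ F).symm (f.comp (ContinuousLinearMap.inl ℝ F ℝ)),
    fun w t => ?_⟩
  rw [real_inner_comm, InnerProductSpace.toDual_symm_apply]
  have : ((w, t) : F × ℝ) = (w, 0) + t • (0, 1) := by simp
  rw [this, map_add, map_smul, smul_eq_mul]
  rfl

section ConstraintValueMap

variable {F F' : Type*} [NormedAddCommGroup F] [InnerProductSpace ℝ F]
  [NormedAddCommGroup F'] [NormedSpace ℝ F'] {A : F →ₗ[ℝ] F'} {K : Set F'} {C : Set F}
  {b : F'} {c : F}

noncomputable def constraintValueMap (A : F →ₗ[ℝ] F') (c : F) : F × F' →ₗ[ℝ] F' × ℝ :=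
  (A.coprod .id).prod (innerₛₗ ℝ c ∘ₗ .fst ℝ F F')

@[simp]
lemma constraintValueMap_apply (x : F) (k : F') :
    constraintValueMap A c (x, k) = (A x + k, ⟪c, x⟫) := rfl

lemma notMem_closure_image_constraintValueMap {δ U : ℝ} (hδ : 0 < δ)
    (hU : ∀ x ∈ C, ∀ k ∈ K, ‖b - A x - k‖ ≤ δ → ⟪c, x⟫ ≤ U) :
    (b, U + 1) ∉ closure (constraintValueMap A c '' C ×ˢ K) := by
  intro hmem
  obtain ⟨_, ⟨⟨x, k⟩, ⟨hx, hk⟩, rfl⟩, hdist⟩ :=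
    Metric.mem_closure_iff.1 hmem (min δ 1) (lt_min hδ one_pos)
  rw [constraintValueMap_apply, Prod.dist_eq, max_lt_iff, dist_eq_norm, sub_add_eq_sub_sub,
    Real.dist_eq, abs_lt] at hdist
  have := hU x hx k hk (hdist.1.le.trans (min_le_left _ _))
  linarith [hdist.2.1, min_le_right δ 1]

end ConstraintValueMap

section ConicProgram

variable {A : E →ₗ[ℝ] E'} {K : Set E'} {C : Set E} {b : E'} {c : E}

lemma inner_le_inner_of_mem_Xfeas_of_mem_Yfeas {x : E} {y : E'} (hx : x ∈ Xfeas A K C b)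
    (hy : y ∈ Yfeas A K C c) : ⟪c, x⟫ ≤ ⟪b, y⟫ := by
  have h1 : 0 ≤ ⟪b - A x, y⟫ := hy.1 _ hx.2
  have h2 : 0 ≤ ⟪x, LinearMap.adjoint A y - c⟫ := hy.2 x hx.1
  rw [inner_sub_left] at h1
  rw [inner_sub_right, LinearMap.adjoint_inner_right, real_inner_comm c] at h2
  linarith

lemma exists_forall_inner_le_of_norm_sub_le (hC : Convex ℝ C) (hK : Convex ℝ K) {x₀ : E}
    (hx₀ : x₀ ∈ intrinsicInterior ℝ C) (hk₀ : b - A x₀ ∈ intrinsicInterior ℝ K) {P : ℝ}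
    (hP : P ∈ upperBounds ((fun x => ⟪c, x⟫) '' Xfeas A K C b)) :
    ∃ δ > 0, ∃ U, ∀ x ∈ C, ∀ k ∈ K, ‖b - A x - k‖ ≤ δ → ⟪c, x⟫ ≤ U := by
  have hp : (x₀, b - A x₀) ∈ intrinsicInterior ℝ (C ×ˢ K) := by
    rw [intrinsicInterior_prod_eq]
    exact ⟨hx₀, hk₀⟩
  obtain ⟨δ, hδ, R, hR⟩ := exists_mem_map_eq_add_of_mem_intrinsicInterior (A.coprod .id) hp
  refine ⟨δ, hδ, 2 * P + ‖c‖ * R, fun x hx k hk hres => ?_⟩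
  have hv : (x₀, b - A x₀) - (x, k) ∈ vectorSpan ℝ (C ×ˢ K) :=
    vsub_mem_vectorSpan ℝ (intrinsicInterior_subset hp) (mk_mem_prod hx hk)
  have hTv : A.coprod .id ((x₀, b - A x₀) - (x, k)) = b - A x - k := by
    simp only [Prod.mk_sub_mk, LinearMap.coprod_apply, map_sub, LinearMap.id_apply]
    abel
  obtain ⟨⟨z, n⟩, ⟨hz, hn⟩, hzn, hTzn⟩ := hR _ hv (hTv ▸ hres)
  simp only [hTv, LinearMap.coprod_apply, LinearMap.id_apply] at hTzn
  have hmid : (1 / 2 : ℝ) • x + (1 / 2 : ℝ) • z ∈ Xfeas A K C b := by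
    refine ⟨hC hx hz (by norm_num) (by norm_num) (by norm_num), ?_⟩
    have hslack :
        b - A ((1 / 2 : ℝ) • x + (1 / 2 : ℝ) • z) = (1 / 2 : ℝ) • k + (1 / 2 : ℝ) • n := by
      rw [map_add, map_smul, map_smul]
      linear_combination (norm := module) (-(1 / 2 : ℝ)) • hTzn
    rw [hslack]
    exact hK hk hn (by norm_num) (by norm_num) (by norm_num)
  have hval := hP ⟨_, hmid, rfl⟩
  have hcz : -(‖c‖ * R) ≤ ⟪c, z⟫ :=
    neg_le_of_abs_le ((abs_real_inner_le_norm c z).trans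
      (by gcongr; exact (norm_fst_le (z, n)).trans hzn))
  simp only [inner_add_right, real_inner_smul_right] at hval
  linarith

lemma neg_inv_smul_mem_Yfeas (hK : IsClosedConvexCone K) (hC : IsClosedConvexCone C) {y : E'}
    {γ u : ℝ} (hγ : 0 < γ) (h : ∀ x ∈ C, ∀ k ∈ K, ⟪A x + k, y⟫ + ⟪c, x⟫ * γ < u) :
    -(γ⁻¹ • y) ∈ Yfeas A K C c := by
  have hcone : ∀ x ∈ C, ∀ k ∈ K, ⟪A x + k, y⟫ + ⟪c, x⟫ * γ ≤ 0 := fun x hx k hk =>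
    nonpos_of_forall_mul_lt fun t ht => by
      convert h (t • x) (hC.smul_mem hx ht) (t • k) (hK.smul_mem hk ht) using 1
      simp only [map_smul, ← smul_add, real_inner_smul_left, real_inner_smul_right]
      ring
  have hγinv : 0 ≤ γ⁻¹ := (inv_pos.2 hγ).le
  constructor
  · intro k hk
    have := hcone 0 hC.zero_mem k hk
    rw [map_zero, zero_add, inner_zero_right, zero_mul, add_zero] at this
    rw [inner_neg_right, real_inner_smul_right]
    exact neg_nonneg.2 (mul_nonpos_of_nonneg_of_nonpos hγinv this)
  · intro x hx
    have := mul_nonpos_of_nonneg_of_nonpos hγinv (hcone x hx 0 hK.zero_mem)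
    rw [add_zero, mul_add, mul_comm ⟪c, x⟫, inv_mul_cancel_left₀ hγ.ne'] at this
    rw [map_neg, map_smul, inner_sub_right, inner_neg_right, real_inner_smul_right,
      LinearMap.adjoint_inner_right, real_inner_comm c x]
    linarith

end ConicProgram

theorem stmt4 (A : E →ₗ[ℝ] E') (K : Set E') (C : Set E)
    (hK : IsClosedConvexCone K) (hC : IsClosedConvexCone C) (b : E') (c : E)
    (hslater : ∃ x ∈ intrinsicInterior ℝ C, b - A x ∈ intrinsicInterior ℝ K) :
    (((fun x => ⟪c, x⟫) '' Xfeas A K C b).Nonempty ∧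
        BddAbove ((fun x => ⟪c, x⟫) '' Xfeas A K C b)) ↔
      (Yfeas A K C c).Nonempty := by
  obtain ⟨x₀, hx₀C, hx₀K⟩ := hslater
  have hx₀ : x₀ ∈ Xfeas A K C b := ⟨intrinsicInterior_subset hx₀C, intrinsicInterior_subset hx₀K⟩
  constructor
  · rintro ⟨-, P, hP⟩
    obtain ⟨δ, hδ, U, hU⟩ := exists_forall_inner_le_of_norm_sub_le hC.convex hK.convex hx₀C hx₀K hP
    obtain ⟨f, u, hfM, hfz⟩ := geometric_hahn_banach_closed_point
      ((hC.convex.prod hK.convex).linear_image _).closure isClosed_closure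
      (notMem_closure_image_constraintValueMap hδ hU)
    obtain ⟨y, hy⟩ := f.exists_inner_add_mul_eq
    have hM : ∀ x ∈ C, ∀ k ∈ K, ⟪A x + k, y⟫ + ⟪c, x⟫ * f (0, 1) < u := fun x hx k hk => by
      have := hfM _ (subset_closure ⟨(x, k), ⟨hx, hk⟩, rfl⟩)
      rwa [constraintValueMap_apply, hy] at this
    have hγ : 0 < f (0, 1) := by
      have h₀ := hM x₀ hx₀.1 _ hx₀.2
      have hU₀ := hU x₀ hx₀.1 _ hx₀.2 (by simp [hδ.le])
      rw [add_sub_cancel] at h₀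
      rw [hy] at hfz
      nlinarith
    exact ⟨_, neg_inv_smul_mem_Yfeas hK hC hγ hM⟩
  · rintro ⟨y, hy⟩
    exact ⟨⟨_, x₀, hx₀, rfl⟩,
      ⟨⟪b, y⟫, forall_mem_image.2 fun _ hx => inner_le_inner_of_mem_Xfeas_of_mem_Yfeas hx hy⟩⟩
end

section
/- Suppose the primal feasible set X(b) is nonempty. Then the recession cone of X(b), namely {r ∈ E : x + μ r ∈ X(b) for all x ∈ X(b) and all μ ≥ 0}, equals {x ∈ C : A x ∈ −K} and equals the polar cone of C_d := A*(K*) − C*; moreover the polar cone of this recession cone equals the closure of C_d. Furthermore, with rec X denoting this recession cone, one has the inclusions and equalities: (rec X)° ⊇ {c ∈ E : Y(c) is almost feasible} ⊇ relint((rec X)°) = relint(C_d) = {c ∈ E : there exists y ∈ relint K* with A* y − c ∈ relint C*}. -/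
/-!
A ray `x₀ + μ r` in `X(b)` forces `r ∈ C` and `-A r ∈ K`, since dividing by `μ → ∞` lands in the
closed cones. The cone `C_d = A*(K*) - C*` is exactly the set of costs `c` with `Y(c) ≠ ∅`, and
weak duality along recession directions (`⟪c, r⟫ = ⟪y, A r⟫ - ⟪A* y - c, r⟫ ≤ 0`) together with
`K** = K`, `C** = C` gives `rec X = C_d°`; the bipolar theorem then gives `(rec X)° = cl C_d`.
Almost feasible costs are limits of points of `C_d`. For the relative interiors, `ri (cl S) = ri S`
for convex `S` and `ri` commutes with linear maps (both via the segment principle of Rockafellar,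
Thm. 6.1), and `C_d` is the image of `K* × C*` under `(y, s) ↦ A* y - s`.
-/

open RealInnerProductSpace Set Pointwise

variable {E E' : Type*}
  [NormedAddCommGroup E] [InnerProductSpace ℝ E] [FiniteDimensional ℝ E]
  [NormedAddCommGroup E'] [InnerProductSpace ℝ E'] [FiniteDimensional ℝ E']

section IntrinsicInterior

variable {V : Type*} [NormedAddCommGroup V] [NormedSpace ℝ V] {s : Set V} {x y z : V}

theorem AffineSubspace.combo_mem {Q : AffineSubspace ℝ V} (hx : x ∈ Q) (hy : y ∈ Q) {a b : ℝ}
    (hab : a + b = 1) : a • x + b • y ∈ Q := by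
  have h := AffineMap.lineMap_mem a hy hx
  rwa [AffineMap.lineMap_apply_module, ← eq_sub_of_add_eq' hab, add_comm] at h

theorem mem_intrinsicInterior_iff_ball :
    x ∈ intrinsicInterior ℝ s ↔
      x ∈ affineSpan ℝ s ∧ ∃ ε > 0, ∀ w ∈ affineSpan ℝ s, dist w x < ε → w ∈ s := by
  simp only [mem_intrinsicInterior, mem_interior_iff_mem_nhds, Metric.mem_nhds_iff]
  constructor
  · rintro ⟨x, ⟨ε, hε, hball⟩, rfl⟩
    exact ⟨x.2, ε, hε, fun w hw hwx => hball (show (⟨w, hw⟩ : affineSpan ℝ s) ∈ _ from hwx)⟩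
  · rintro ⟨hx, ε, hε, hball⟩
    exact ⟨⟨x, hx⟩, ⟨ε, hε, fun w hw => hball w w.2 hw⟩, rfl⟩

theorem exists_one_lt_combo_mem_of_mem_intrinsicInterior (hx : x ∈ intrinsicInterior ℝ s)
    (hy : y ∈ s) : ∃ μ > (1:ℝ), μ • x + (1 - μ) • y ∈ s := by
  obtain ⟨hxA, ε, hε, hball⟩ := mem_intrinsicInterior_iff_ball.1 hx
  set μ := 1 + ε / (2 * (dist x y + 1))
  have hμ : 1 < μ := lt_add_of_pos_right 1 (by positivity)
  refine ⟨μ, hμ, hball _ (AffineSubspace.combo_mem hxA (subset_affineSpan ℝ s hy) (by ring)) ?_⟩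
  have hdist : dist (μ • x + (1 - μ) • y) x = (μ - 1) * dist x y := by
    rw [dist_eq_norm, dist_eq_norm, show μ • x + (1 - μ) • y - x = (μ - 1) • (x - y) by module,
      norm_smul, Real.norm_of_nonneg (by linarith)]
  rw [hdist, show μ - 1 = ε / (2 * (dist x y + 1)) by ring, div_mul_eq_mul_div,
    div_lt_iff₀ (by positivity)]
  nlinarith [dist_nonneg (x := x) (y := y)]

variable [FiniteDimensional ℝ V]

theorem Convex.combo_intrinsicInterior_closure_mem_intrinsicInterior (hs : Convex ℝ s)
    (hx : x ∈ intrinsicInterior ℝ s) (hy : y ∈ closure s) {a b : ℝ} (ha : 0 < a) (hb : 0 ≤ b)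
    (hab : a + b = 1) : a • x + b • y ∈ intrinsicInterior ℝ s := by
  rw [mem_intrinsicInterior_iff_ball] at hx ⊢
  obtain ⟨hxA, ε, hε, hball⟩ := hx
  have hyA : y ∈ affineSpan ℝ s := by
    rw [← intrinsicClosure_eq_closure ℝ] at hy
    exact intrinsicClosure_subset_affineSpan hy
  refine ⟨AffineSubspace.combo_mem hxA hyA hab, a * ε / 2, by positivity, fun w hw hwz => ?_⟩
  obtain ⟨y', hy', hyy'⟩ := Metric.mem_closure_iff.1 hy (a * ε / 2) (by positivity)
  -- write `w = a • u + b • y'` and check that `u` is close to `x`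
  set u := a⁻¹ • w + (-(b * a⁻¹)) • y'
  have hwu : w = a • u + b • y' := by
    simp only [u]
    match_scalars <;> field_simp
    ring
  have hu : u ∈ affineSpan ℝ s :=
    AffineSubspace.combo_mem hw (subset_affineSpan ℝ s hy') (by field_simp; linarith)
  have hux : dist u x < ε := by
    have : u - x = a⁻¹ • ((w - (a • x + b • y)) + b • (y - y')) := by
      simp only [u]
      match_scalars <;> field_simp
      linarith
    calc dist u x = a⁻¹ * ‖(w - (a • x + b • y)) + b • (y - y')‖ := by
          rw [dist_eq_norm, this, norm_smul, Real.norm_of_nonneg (inv_nonneg.2 ha.le)]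
      _ ≤ a⁻¹ * (dist w (a • x + b • y) + b * dist y y') := by
          gcongr
          refine (norm_add_le _ _).trans ?_
          rw [norm_smul, Real.norm_of_nonneg hb, dist_eq_norm, dist_eq_norm]
      _ < a⁻¹ * (a * ε / 2 + a * ε / 2) := by
          gcongr
          nlinarith [dist_nonneg (x := y) (y := y')]
      _ = ε := by field_simp; ring
  exact hwu ▸ hs (hball u hu hux) hy' ha.le hb hab

protected theorem Convex.intrinsicInterior (hs : Convex ℝ s) :
    Convex ℝ (intrinsicInterior ℝ s) := by
  intro x hx y hy a b ha hb hab
  rcases ha.eq_or_lt with rfl | ha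
  · simpa [show b = 1 by linarith] using hy
  · exact hs.combo_intrinsicInterior_closure_mem_intrinsicInterior hx
      (subset_closure (intrinsicInterior_subset hy)) ha hb hab

theorem Convex.mem_intrinsicInterior_of_combo_mem_closure (hs : Convex ℝ s)
    (hx : x ∈ intrinsicInterior ℝ s) {μ : ℝ} (hμ : 1 < μ) (h : μ • z + (1 - μ) • x ∈ closure s) :
    z ∈ intrinsicInterior ℝ s := by
  have hμ₀ : μ ≠ 0 := by positivity
  convert hs.combo_intrinsicInterior_closure_mem_intrinsicInterior hx h
    (a := 1 - μ⁻¹) (b := μ⁻¹) (by simpa using inv_lt_one_of_one_lt₀ hμ) (by positivity) (by ring)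
    using 1
  match_scalars <;> field_simp
  ring

theorem Convex.mem_intrinsicInterior_of_forall_exists_one_lt (hs : Convex ℝ s) (hz : z ∈ s)
    (h : ∀ y ∈ s, ∃ μ > (1:ℝ), μ • z + (1 - μ) • y ∈ s) : z ∈ intrinsicInterior ℝ s := by
  obtain ⟨x, hx⟩ := Set.Nonempty.intrinsicInterior hs ⟨z, hz⟩
  obtain ⟨μ, hμ, hp⟩ := h x (intrinsicInterior_subset hx)
  exact hs.mem_intrinsicInterior_of_combo_mem_closure hx hμ (subset_closure hp)

theorem Convex.intrinsicInterior_closure (hs : Convex ℝ s) :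
    intrinsicInterior ℝ (closure s) = intrinsicInterior ℝ s := by
  refine Subset.antisymm (fun z hz => ?_) (fun z hz => ?_)
  · have hne : s.Nonempty := closure_nonempty_iff.1 ⟨z, intrinsicInterior_subset hz⟩
    obtain ⟨x, hx⟩ := hne.intrinsicInterior hs
    obtain ⟨μ, hμ, hp⟩ := exists_one_lt_combo_mem_of_mem_intrinsicInterior hz
      (subset_closure (intrinsicInterior_subset hx))
    exact hs.mem_intrinsicInterior_of_combo_mem_closure hx hμ hp
  · have hspan : affineSpan ℝ (closure s) = affineSpan ℝ s := by
      rw [← intrinsicClosure_eq_closure ℝ, affineSpan_intrinsicClosure]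
    obtain ⟨hzA, ε, hε, hball⟩ := mem_intrinsicInterior_iff_ball.1 hz
    exact mem_intrinsicInterior_iff_ball.2
      ⟨hspan ▸ hzA, ε, hε, fun w hw hwz => subset_closure (hball w (hspan ▸ hw) hwz)⟩

theorem Convex.subset_closure_intrinsicInterior (hs : Convex ℝ s) :
    s ⊆ closure (intrinsicInterior ℝ s) := by
  intro y hy
  obtain ⟨x, hx⟩ := Set.Nonempty.intrinsicInterior hs ⟨y, hy⟩
  refine closure_mono ?_ (segment_subset_closure_openSegment (right_mem_segment ℝ x y))
  rintro _ ⟨a, b, ha, hb, hab, rfl⟩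
  exact hs.combo_intrinsicInterior_closure_mem_intrinsicInterior hx (subset_closure hy) ha hb.le hab

theorem Convex.intrinsicInterior_image_linearMap {W : Type*} [NormedAddCommGroup W]
    [NormedSpace ℝ W] [FiniteDimensional ℝ W] (hs : Convex ℝ s) (f : V →ₗ[ℝ] W) :
    intrinsicInterior ℝ (f '' s) = f '' intrinsicInterior ℝ s := by
  refine Subset.antisymm ?_ ?_
  · have hcl : closure (f '' s) = closure (f '' intrinsicInterior ℝ s) := by
      refine Subset.antisymm (closure_minimal ?_ isClosed_closure)
        (closure_mono (image_mono intrinsicInterior_subset))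
      exact (image_mono hs.subset_closure_intrinsicInterior).trans
        (image_closure_subset_closure_image f.continuous_of_finiteDimensional)
    calc intrinsicInterior ℝ (f '' s)
        = intrinsicInterior ℝ (closure (f '' s)) :=
          (hs.linear_image f).intrinsicInterior_closure.symm
      _ = intrinsicInterior ℝ (f '' intrinsicInterior ℝ s) := by
          rw [hcl, (hs.intrinsicInterior.linear_image f).intrinsicInterior_closure]
      _ ⊆ f '' intrinsicInterior ℝ s := intrinsicInterior_subset
  · rintro _ ⟨x, hx, rfl⟩
    refine (hs.linear_image f).mem_intrinsicInterior_of_forall_exists_one_lt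
      ⟨x, intrinsicInterior_subset hx, rfl⟩ ?_
    rintro _ ⟨y, hy, rfl⟩
    obtain ⟨μ, hμ, hp⟩ := exists_one_lt_combo_mem_of_mem_intrinsicInterior hx hy
    exact ⟨μ, hμ, _, hp, by simp⟩

end IntrinsicInterior

section Cones

variable {F : Type*} [NormedAddCommGroup F] [InnerProductSpace ℝ F] {S Q : Set F}

theorem IsClosedConvexCone.add_mem (hQ : IsClosedConvexCone Q) {x y : F} (hx : x ∈ Q)
    (hy : y ∈ Q) : x + y ∈ Q := by
  have h := hQ.smul_mem (hQ.convex hx hy (show (0:ℝ) ≤ 1 / 2 by norm_num)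
    (show (0:ℝ) ≤ 1 / 2 by norm_num) (by norm_num)) (show (0:ℝ) ≤ 2 by norm_num)
  rwa [smul_add, smul_smul, smul_smul, show (2:ℝ) * (1 / 2) = 1 by norm_num, one_smul,
    one_smul] at h

theorem IsClosedConvexCone.mem_of_forall_add_smul_mem (hQ : IsClosedConvexCone Q) {p r : F}
    (h : ∀ μ : ℝ, 0 ≤ μ → p + μ • r ∈ Q) : r ∈ Q := by
  have hlim : Filter.Tendsto (fun μ : ℝ => μ⁻¹ • p + r) Filter.atTop (nhds r) := by
    simpa using ((tendsto_inv_atTop_zero (𝕜 := ℝ)).smul_const p).add_const r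
  refine hQ.closed.mem_of_tendsto hlim ?_
  filter_upwards [Filter.eventually_gt_atTop 0] with μ hμ
  have := hQ.smul_mem (h μ hμ.le) (inv_nonneg.2 hμ.le)
  rwa [smul_add, smul_smul, inv_mul_cancel₀ hμ.ne', one_smul] at this

theorem zero_mem_dualCone (S : Set F) : (0 : F) ∈ dualCone S :=
  fun x _ => (inner_zero_right x).ge

theorem isClosedConvexCone_closure (hS : Convex ℝ S) (h0 : (0 : F) ∈ S)
    (hsmul : ∀ x ∈ S, ∀ t : ℝ, 0 ≤ t → t • x ∈ S) : IsClosedConvexCone (closure S) where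
  closed := isClosed_closure
  convex := hS.closure
  smul_mem _ hx t ht := closure_mono (image_subset_iff.2 fun y hy => hsmul y hy t ht)
    (image_closure_subset_closure_image (continuous_const_smul t) (mem_image_of_mem (t • ·) hx))
  zero_mem := subset_closure h0

theorem isClosedConvexCone_dualCone [CompleteSpace F] (S : Set F) :
    IsClosedConvexCone (dualCone S) where
  closed := (ProperCone.innerDual S).isClosed
  convex := (ProperCone.innerDual S).convex
  smul_mem _ hx _ ht := (ProperCone.innerDual S).smul_mem hx ht
  zero_mem := zero_mem_dualCone S

theorem IsClosedConvexCone.dualCone_dualCone [CompleteSpace F] (hQ : IsClosedConvexCone Q) :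
    dualCone (dualCone Q) = Q :=
  let P : ProperCone ℝ F :=
    ⟨⟨⟨⟨Q, hQ.add_mem⟩, hQ.zero_mem⟩, fun c _ hx => hQ.smul_mem hx c.2⟩, hQ.closed⟩
  congrArg SetLike.coe (ProperCone.innerDual_innerDual P)

theorem dualCone_closure (S : Set F) : dualCone (closure S) = dualCone S := by
  refine Subset.antisymm (fun y hy x hx => hy x (subset_closure hx)) (fun y hy => ?_)
  exact closure_minimal hy (isClosed_le continuous_const (continuous_id.inner continuous_const) :
    IsClosed {x : F | 0 ≤ ⟪x, y⟫})

theorem polarCone_eq_neg_dualCone (S : Set F) : polarCone S = -dualCone S := by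
  ext y
  simp [polarCone, dualCone, inner_neg_right]

theorem dualCone_neg (S : Set F) : dualCone (-S) = -dualCone S := by
  ext y
  simp only [dualCone, mem_neg, mem_ofPred_eq]
  constructor
  · intro h x hx
    simpa [inner_neg_right, inner_neg_left] using h (-x) (by simpa using hx)
  · intro h x hx
    simpa [inner_neg_right, inner_neg_left] using h (-x) hx

theorem polarCone_polarCone (S : Set F) : polarCone (polarCone S) = dualCone (dualCone S) := by
  rw [polarCone_eq_neg_dualCone, polarCone_eq_neg_dualCone, dualCone_neg, neg_neg]

theorem polarCone_polarCone_eq_closure [CompleteSpace F] (hS : IsClosedConvexCone (closure S)) :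
    polarCone (polarCone S) = closure S := by
  rw [polarCone_polarCone, ← dualCone_closure S, hS.dualCone_dualCone]

end Cones

section RecessionCone

variable {F G : Type*} [NormedAddCommGroup F] [InnerProductSpace ℝ F]
  [NormedAddCommGroup G] [InnerProductSpace ℝ G] {A : F →ₗ[ℝ] G} {K : Set G} {C : Set F}

theorem setOf_forall_add_smul_mem_Xfeas_eq {b : G} (hK : IsClosedConvexCone K)
    (hC : IsClosedConvexCone C) (hX : (Xfeas A K C b).Nonempty) :
    {r : F | ∀ x ∈ Xfeas A K C b, ∀ μ : ℝ, 0 ≤ μ → x + μ • r ∈ Xfeas A K C b} =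
      recXSet A K C := by
  have hslack : ∀ (x r : F) (μ : ℝ), b - A (x + μ • r) = (b - A x) + μ • -A r := by
    intro x r μ
    simp only [map_add, map_smul]
    module
  obtain ⟨x₀, hx₀⟩ := hX
  ext r
  constructor
  · intro hr
    refine ⟨hC.mem_of_forall_add_smul_mem fun μ hμ => (hr x₀ hx₀ μ hμ).1,
      hK.mem_of_forall_add_smul_mem (p := b - A x₀) fun μ hμ => ?_⟩
    simpa only [hslack] using (hr x₀ hx₀ μ hμ).2
  · rintro ⟨hrC, hrK⟩ x ⟨hxC, hxK⟩ μ hμ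
    refine ⟨hC.add_mem hxC (hC.smul_mem hrC hμ), ?_⟩
    rw [hslack]
    exact hK.add_mem hxK (hK.smul_mem hrK hμ)

end RecessionCone

section ConicProgram

variable {A : E →ₗ[ℝ] E'} {K : Set E'} {C : Set E} {c : E}

theorem mem_adjoint_image_add_neg_dualCone_iff :
    c ∈ (⇑(LinearMap.adjoint A) '' dualCone K) + (-(dualCone C)) ↔ (Yfeas A K C c).Nonempty := by
  simp only [mem_add, mem_image, mem_neg]
  constructor
  · rintro ⟨_, ⟨y, hy, rfl⟩, z, hz, rfl⟩
    exact ⟨y, hy, by simpa using hz⟩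
  · rintro ⟨y, hy, hyc⟩
    exact ⟨_, ⟨y, hy, rfl⟩, c - LinearMap.adjoint A y, by simpa using hyc, by abel⟩

theorem AlmostFeasY.of_nonempty (h : (Yfeas A K C c).Nonempty) : AlmostFeasY A K C c :=
  fun ε hε => ⟨0, by simpa using hε.le, by simpa using h⟩

theorem AlmostFeasY.mem_closure (h : AlmostFeasY A K C c) :
    c ∈ closure ((⇑(LinearMap.adjoint A) '' dualCone K) + (-(dualCone C))) := by
  refine Metric.mem_closure_iff.2 fun ε hε => ?_
  obtain ⟨cε, hcε, hY⟩ := h (ε / 2) (by positivity)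
  refine ⟨c + cε, mem_adjoint_image_add_neg_dualCone_iff.2 hY, ?_⟩
  rw [dist_eq_norm, sub_add_cancel_left, norm_neg]
  linarith

theorem convex_adjoint_image_add_neg_dualCone :
    Convex ℝ ((⇑(LinearMap.adjoint A) '' dualCone K) + (-(dualCone C))) :=
  ((isClosedConvexCone_dualCone K).convex.linear_image _).add
    (isClosedConvexCone_dualCone C).convex.neg

theorem isClosedConvexCone_closure_adjoint_image_add_neg_dualCone :
    IsClosedConvexCone (closure ((⇑(LinearMap.adjoint A) '' dualCone K) + (-(dualCone C)))) := by
  refine isClosedConvexCone_closure convex_adjoint_image_add_neg_dualCone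
    (mem_adjoint_image_add_neg_dualCone_iff.2
      ⟨0, zero_mem_dualCone K, by simpa using zero_mem_dualCone C⟩) fun c hc t ht => ?_
  obtain ⟨y, hyK, hyC⟩ := mem_adjoint_image_add_neg_dualCone_iff.1 hc
  refine mem_adjoint_image_add_neg_dualCone_iff.2 ⟨t • y, ?_, ?_⟩
  · exact (isClosedConvexCone_dualCone K).smul_mem hyK ht
  · rw [map_smul, ← smul_sub]
    exact (isClosedConvexCone_dualCone C).smul_mem hyC ht

theorem recXSet_eq_polarCone (hK : IsClosedConvexCone K) (hC : IsClosedConvexCone C) :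
    recXSet A K C = polarCone ((⇑(LinearMap.adjoint A) '' dualCone K) + (-(dualCone C))) := by
  ext r
  constructor
  · rintro ⟨hrC, hrK⟩ c hc
    obtain ⟨y, hyK, hyC⟩ := mem_adjoint_image_add_neg_dualCone_iff.1 hc
    have h₁ : 0 ≤ ⟪-A r, y⟫ := hyK _ hrK
    have h₂ : 0 ≤ ⟪r, LinearMap.adjoint A y - c⟫ := hyC r hrC
    rw [inner_neg_left] at h₁
    rw [inner_sub_right, LinearMap.adjoint_inner_right] at h₂
    rw [real_inner_comm]
    linarith
  · intro hr
    refine ⟨?_, ?_⟩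
    · rw [← hC.dualCone_dualCone]
      intro z hz
      have := hr (-z) (mem_adjoint_image_add_neg_dualCone_iff.2
        ⟨0, zero_mem_dualCone K, by simpa using hz⟩)
      rw [inner_neg_left] at this
      linarith
    · rw [mem_neg, ← hK.dualCone_dualCone]
      intro y hy
      have := hr (LinearMap.adjoint A y) (mem_adjoint_image_add_neg_dualCone_iff.2
        ⟨y, hy, by simpa using zero_mem_dualCone C⟩)
      rw [LinearMap.adjoint_inner_left] at this
      rw [inner_neg_right]
      linarith

theorem intrinsicInterior_adjoint_image_add_neg_dualCone :
    intrinsicInterior ℝ ((⇑(LinearMap.adjoint A) '' dualCone K) + (-(dualCone C))) =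
      {c : E | ∃ y ∈ intrinsicInterior ℝ (dualCone K),
        LinearMap.adjoint A y - c ∈ intrinsicInterior ℝ (dualCone C)} := by
  set g : E' × E →ₗ[ℝ] E := LinearMap.adjoint A ∘ₗ LinearMap.fst ℝ E' E - LinearMap.snd ℝ E' E
  have hg : (⇑(LinearMap.adjoint A) '' dualCone K) + (-(dualCone C)) =
      g '' (dualCone K ×ˢ dualCone C) := by
    ext c
    simp only [mem_add, mem_image, mem_neg, mem_prod, Prod.exists]
    constructor
    · rintro ⟨_, ⟨y, hy, rfl⟩, z, hz, rfl⟩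
      exact ⟨y, -z, ⟨hy, hz⟩, by simp [g, sub_eq_add_neg]⟩
    · rintro ⟨y, z, ⟨hy, hz⟩, rfl⟩
      exact ⟨_, ⟨y, hy, rfl⟩, -z, by simpa using hz, by simp [g, sub_eq_add_neg]⟩
  rw [hg, Convex.intrinsicInterior_image_linearMap
    ((isClosedConvexCone_dualCone K).convex.prod (isClosedConvexCone_dualCone C).convex),
    intrinsicInterior_prod_eq]
  ext c
  constructor
  · rintro ⟨⟨y, z⟩, ⟨hy, hz⟩, rfl⟩
    exact ⟨y, hy, by simpa [g] using hz⟩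
  · rintro ⟨y, hy, hz⟩
    exact ⟨(y, LinearMap.adjoint A y - c), ⟨hy, hz⟩, by simp [g]⟩

end ConicProgram

theorem stmt8 (A : E →ₗ[ℝ] E') (K : Set E') (C : Set E)
    (hK : IsClosedConvexCone K) (hC : IsClosedConvexCone C) (b : E')
    (hXne : (Xfeas A K C b).Nonempty) :
    {r : E | ∀ x ∈ Xfeas A K C b, ∀ μ : ℝ, 0 ≤ μ → x + μ • r ∈ Xfeas A K C b} =
      recXSet A K C ∧
    recXSet A K C =
      polarCone ((⇑(LinearMap.adjoint A) '' dualCone K) + (-(dualCone C))) ∧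
    polarCone (recXSet A K C) =
      closure ((⇑(LinearMap.adjoint A) '' dualCone K) + (-(dualCone C))) ∧
    {c : E | AlmostFeasY A K C c} ⊆ polarCone (recXSet A K C) ∧
    intrinsicInterior ℝ (polarCone (recXSet A K C)) ⊆ {c : E | AlmostFeasY A K C c} ∧
    intrinsicInterior ℝ (polarCone (recXSet A K C)) =
      intrinsicInterior ℝ ((⇑(LinearMap.adjoint A) '' dualCone K) + (-(dualCone C))) ∧
    intrinsicInterior ℝ ((⇑(LinearMap.adjoint A) '' dualCone K) + (-(dualCone C))) =
      {c : E | ∃ y ∈ intrinsicInterior ℝ (dualCone K),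
        LinearMap.adjoint A y - c ∈ intrinsicInterior ℝ (dualCone C)} := by
  set Cd := (⇑(LinearMap.adjoint A) '' dualCone K) + (-(dualCone C))
  have hrec : recXSet A K C = polarCone Cd := recXSet_eq_polarCone hK hC
  have hpolar : polarCone (recXSet A K C) = closure Cd := by
    rw [hrec, polarCone_polarCone_eq_closure
      isClosedConvexCone_closure_adjoint_image_add_neg_dualCone]
  have hri : intrinsicInterior ℝ (polarCone (recXSet A K C)) = intrinsicInterior ℝ Cd := by
    rw [hpolar, convex_adjoint_image_add_neg_dualCone.intrinsicInterior_closure]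
  refine ⟨setOf_forall_add_smul_mem_Xfeas_eq hK hC hXne, hrec, hpolar,
    fun c hc => hpolar ▸ AlmostFeasY.mem_closure hc, ?_, hri,
    intrinsicInterior_adjoint_image_add_neg_dualCone⟩
  rw [hri]
  exact fun c hc =>
    .of_nonempty (mem_adjoint_image_add_neg_dualCone_iff.1 (intrinsicInterior_subset hc))
end
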